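/- Let I = ⟨Σ,T,ψ⟩ be a 3DT-instance of span n and π a permutation of {0,…,n} with I ∼ π. Then I is 3DT-collapsible if and only if d_t(π) = |T| = d_b(π)/3. -/

import Mathlib

/- ----------------------------------------------------------------------
  Common definitions for the formalization of
  "Sorting by Transpositions is Difficult" (Bulteau, Fertin, Rusu).

  Permutations of {0,…,n} are represented as functions ℕ → ℕ that are
  bijections of the set {0,…,n} (everything above n is irrelevant /
  fixed).
---------------------------------------------------------------------- -/

set_option autoImplicit false

/-- The transposition `τ_{i,j,k}`, as a function on `ℕ`
(for `0 < i < j < k ≤ n` it is a permutation of `{0,…,n}`,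
fixing everything `≥ k`). Here `q = k + i - j`. -/
def tau (i j k x : ℕ) : ℕ :=
  if x < i then x
  else if x < k + i - j then x + j - i
  else if x < k then x + j - k
  else x

/-- The inverse transposition `τ_{i,j,k}⁻¹ = τ_{i,k+i-j,k}`. -/
def tauInv (i j k x : ℕ) : ℕ := tau i (k + i - j) k x

def min3 (p q r : ℕ) : ℕ := min p (min q r)

def max3 (p q r : ℕ) : ℕ := max p (max q r)

/-- the middle value of three (pairwise distinct) values -/
def mid3 (p q r : ℕ) : ℕ := p + q + r - min3 p q r - max3 p q r

/-- The triple of positions `(p,q,r)` is *well-ordered*: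
one of `p<q<r`, `q<r<p`, `r<p<q` holds. -/
def WellOrdered3 (p q r : ℕ) : Prop :=
  (p < q ∧ q < r) ∨ (q < r ∧ r < p) ∨ (r < p ∧ p < q)

/-- The transposition `τ[a,b,c,ψ]` associated with a (well-ordered) triple
whose `ψ`-positions are `(p,q,r)`: it is `τ_{i,j,k}` for `(i,j,k)` the
sorted sequence of `(p,q,r)`. -/
def tauStep (p q r x : ℕ) : ℕ := tau (min3 p q r) (mid3 p q r) (max3 p q r) x

/-- the inverse of `τ[a,b,c,ψ]` -/
def tauInvStep (p q r x : ℕ) : ℕ := tauInv (min3 p q r) (mid3 p q r) (max3 p q r) x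

/-- the number of breakpoints `d_b(π)` of `π` as a permutation of `{0,…,n}`:
the number of `x ∈ {1,…,n}` such that `(x-1,x)` is not an adjacency,
i.e. `π x ≠ π (x-1) + 1`. -/
def db (n : ℕ) (π : ℕ → ℕ) : ℕ :=
  ((Finset.Icc 1 n).filter fun x => π x ≠ π (x - 1) + 1).card

/-- a triple `(i,j,k)` of integers coding a transposition of `{0,…,n}` -/
def IsTransp (n : ℕ) (t : ℕ × ℕ × ℕ) : Prop :=
  0 < t.1 ∧ t.1 < t.2.1 ∧ t.2.1 < t.2.2 ∧ t.2.2 ≤ n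

/-- `π` can be sorted by `m` transpositions:
there are transpositions `τ_1,…,τ_m` with `π ∘ τ_m ∘ ⋯ ∘ τ_1 = Id` on `{0,…,n}`.
(`d_t(π)` is the least such `m`.) -/
def SortsIn (n : ℕ) (π : ℕ → ℕ) (m : ℕ) : Prop :=
  ∃ L : List (ℕ × ℕ × ℕ), L.length = m ∧ (∀ t ∈ L, IsTransp n t) ∧
    ∀ x ≤ n, π (L.foldl (fun y t => tau t.1 t.2.1 t.2.2 y) x) = x

/-- the three elements of an ordered triple, as a finite set -/
def trElems {α : Type*} [DecidableEq α] (t : α × α × α) : Finset α := {t.1, t.2.1, t.2.2}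

/-- A 3DT-instance `I = ⟨Σ, T, ψ⟩` of span `n`: an alphabet `Sig`,
a set `T` of ordered triples partitioning `Sig`, and an injection
`ψ : Sig → {1,…,n}`. -/
structure TDT (α : Type*) [DecidableEq α] (n : ℕ) where
  Sig : Finset α
  T : Finset (α × α × α)
  psi : α → ℕ
  mem_T : ∀ t ∈ T, t.1 ∈ Sig ∧ t.2.1 ∈ Sig ∧ t.2.2 ∈ Sig
  cover : ∀ σ ∈ Sig, ∃ t ∈ T, σ ∈ trElems t
  nodup_T : ∀ t ∈ T, t.1 ≠ t.2.1 ∧ t.1 ≠ t.2.2 ∧ t.2.1 ≠ t.2.2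
  disj_T : ∀ t ∈ T, ∀ t' ∈ T, t ≠ t' → Disjoint (trElems t) (trElems t')
  psi_mem : ∀ σ ∈ Sig, psi σ ∈ Finset.Icc 1 n
  psi_inj : Set.InjOn psi ↑Sig

namespace TDT

variable {α : Type*} [DecidableEq α] {n : ℕ}

/-- the domain `L = ψ(Σ)` of a 3DT-instance -/
def dom (I : TDT α n) : Finset ℕ := I.Sig.image I.psi

/-- a triple of `T` is well-ordered -/
def WellOrderedT (I : TDT α n) (t : α × α × α) : Prop :=
  WellOrdered3 (I.psi t.1) (I.psi t.2.1) (I.psi t.2.2)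

/-- the transposition `τ[a,b,c,ψ]` associated with a well-ordered triple -/
def tauOf (I : TDT α n) (t : α × α × α) (x : ℕ) : ℕ :=
  tauStep (I.psi t.1) (I.psi t.2.1) (I.psi t.2.2) x

/-- the inverse of `τ[a,b,c,ψ]` -/
def tauOfInv (I : TDT α n) (t : α × α × α) (x : ℕ) : ℕ :=
  tauInvStep (I.psi t.1) (I.psi t.2.1) (I.psi t.2.2) x

end TDT

/-- a *variable*: a pair of triples `[(a,b,c),(x,y,z)]` -/
abbrev Var (α : Type*) : Type _ := (α × α × α) × (α × α × α)

section Main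

variable {α : Type*} [DecidableEq α]

/-- The 3DT-step `I →(a,b,c) I'` (only defined when `(a,b,c)` is a
well-ordered triple of `T`): the triple is removed and `ψ` is composed
with `τ[a,b,c,ψ]⁻¹`. -/
def StepT {n : ℕ} (t : α × α × α) (I I' : TDT α n) : Prop :=
  t ∈ I.T ∧ I.WellOrderedT t ∧
  I'.Sig = I.Sig \ trElems t ∧
  I'.T = I.T.erase t ∧
  ∀ σ ∈ I'.Sig, I'.psi σ = I.tauOfInv t (I.psi σ)

/-- `I` is 3DT-collapsible: some sequence of 3DT-steps reduces it to the
empty instance. -/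
def Collapsible {n : ℕ} (I : TDT α n) : Prop :=
  ∃ J : TDT α n,
    Relation.ReflTransGen (fun X Y => ∃ t, StepT t X Y) I J ∧ J.Sig = ∅ ∧ J.T = ∅

/-- `I ∼ π` : the 3DT-instance `I` (of span `n`) and the permutation `π` of
`{0,…,n}` are equivalent: `π 0 = 0`, `π v = π (v-1) + 1` for `v ∉ L`, and
`π v = π (succ_I⁻¹ v - 1) + 1` for `v ∈ L` (expressed triple by triple). -/
def EquivPerm {n : ℕ} (I : TDT α n) (π : ℕ → ℕ) : Prop :=
  π 0 = 0 ∧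
  (∀ v, 1 ≤ v → v ≤ n → v ∉ I.dom → π v = π (v - 1) + 1) ∧
  ∀ t ∈ I.T,
    π (I.psi t.2.1) = π (I.psi t.1 - 1) + 1 ∧
    π (I.psi t.2.2) = π (I.psi t.2.1 - 1) + 1 ∧
    π (I.psi t.1) = π (I.psi t.2.2 - 1) + 1

/-- `(s 1, …, s l)` is an `l`-block-decomposition of span `n` -/
def IsBlockDec (n l : ℕ) (s : ℕ → ℕ) : Prop :=
  s 1 = 0 ∧ (∀ h, 1 ≤ h → h < l → s h < s (h + 1)) ∧ s l < n

/-- `t_h`: the right end of block `h` (`t_h = s_{h+1}` for `h < l`, `t_l = n`) -/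
def tEnd (n l : ℕ) (s : ℕ → ℕ) (h : ℕ) : ℕ := if h = l then n else s (h + 1)

/-- position `p` lies in block `h`, i.e. `p ∈ {s_h + 1, …, t_h}` -/
def InBlock (n l : ℕ) (s : ℕ → ℕ) (h p : ℕ) : Prop := s h < p ∧ p ≤ tEnd n l s h

/-- a triple of `T` is *internal* (all three elements in one block) -/
def InternalT (n l : ℕ) (I : TDT α n) (s : ℕ → ℕ) (t : α × α × α) : Prop :=
  ∃ h, 1 ≤ h ∧ h ≤ l ∧ InBlock n l s h (I.psi t.1) ∧ InBlock n l s h (I.psi t.2.1) ∧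
    InBlock n l s h (I.psi t.2.2)

/-- block conditions (C2)–(C3) of a variable `[(a,b,c),(x,y,z)]`:
`b,x,y` lie in the source block `h0` and `a,c,z` lie in the target block
`h1 ≠ h0`. -/
def VarBlocksAt (n l : ℕ) (I : TDT α n) (s : ℕ → ℕ) (h0 h1 : ℕ) (a b c x y z : α) : Prop :=
  (a, b, c) ∈ I.T ∧ (x, y, z) ∈ I.T ∧
  1 ≤ h0 ∧ h0 ≤ l ∧ 1 ≤ h1 ∧ h1 ≤ l ∧ h1 ≠ h0 ∧
  InBlock n l s h0 (I.psi b) ∧ InBlock n l s h0 (I.psi x) ∧ InBlock n l s h0 (I.psi y) ∧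
  InBlock n l s h1 (I.psi a) ∧ InBlock n l s h1 (I.psi c) ∧ InBlock n l s h1 (I.psi z)

/-- the variable `[(a,b,c),(x,y,z)]` is *valid*, with source `h0` and target `h1`:
conditions (C2)–(C5). -/
def ValidVarAt (n l : ℕ) (I : TDT α n) (s : ℕ → ℕ) (h0 h1 : ℕ) (a b c x y z : α) : Prop :=
  VarBlocksAt n l I s h0 h1 a b c x y z ∧
  (I.psi x < I.psi y →
    I.psi x < I.psi b ∧ I.psi b < I.psi y ∧
      ∀ σ ∈ I.Sig, I.psi x < I.psi σ → I.psi σ < I.psi y → σ = b) ∧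
  I.psi a < I.psi z ∧ I.psi z < I.psi c

/-- the variable `[(a,b,c),(x,y,z)]` is valid in the block decomposition `s` -/
def ValidVar (n l : ℕ) (I : TDT α n) (s : ℕ → ℕ) (a b c x y z : α) : Prop :=
  ∃ h0 h1, ValidVarAt n l I s h0 h1 a b c x y z

/-- validity of a variable given as a pair of triples -/
def ValidVarV (n l : ℕ) (I : TDT α n) (s : ℕ → ℕ) (V : Var α) : Prop :=
  ValidVar n l I s V.1.1 V.1.2.1 V.1.2.2 V.2.1 V.2.2.1 V.2.2.2

/-- conditions (C2)–(C3) only, of a variable given as a pair of triples -/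
def VarC23V (n l : ℕ) (I : TDT α n) (s : ℕ → ℕ) (V : Var α) : Prop :=
  ∃ h0 h1, VarBlocksAt n l I s h0 h1 V.1.1 V.1.2.1 V.1.2.2 V.2.1 V.2.2.1 V.2.2.2

/-- the external triples of `(I,s)` are partitioned into the set `𝒜` of
variables, each satisfying the property `P`. -/
def PartitionIntoVars (n l : ℕ) (I : TDT α n) (s : ℕ → ℕ) (P : Var α → Prop)
    (𝒜 : Finset (Var α)) : Prop :=
  (∀ V ∈ 𝒜, P V) ∧
  (∀ V ∈ 𝒜, V.1 ≠ V.2) ∧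
  (∀ V ∈ 𝒜, ∀ W ∈ 𝒜, V ≠ W → V.1 ≠ W.1 ∧ V.1 ≠ W.2 ∧ V.2 ≠ W.1 ∧ V.2 ≠ W.2) ∧
  (∀ V ∈ 𝒜, ¬ InternalT n l I s V.1 ∧ ¬ InternalT n l I s V.2) ∧
  ∀ t ∈ I.T, ¬ InternalT n l I s t → ∃ V ∈ 𝒜, t = V.1 ∨ t = V.2

/-- `(I,s)` is a *valid context* -/
def ValidContext (n l : ℕ) (I : TDT α n) (s : ℕ → ℕ) : Prop :=
  IsBlockDec n l s ∧ ∃ 𝒜, PartitionIntoVars n l I s (ValidVarV n l I s) 𝒜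

/-- a 3DT-step on an instance together with an `l`-block-decomposition:
`(I,B) →(t) (I',B')` with `B' = τ⁻¹[B]`. -/
def StepB (n l : ℕ) (t : α × α × α) (P P' : TDT α n × (ℕ → ℕ)) : Prop :=
  StepT t P.1 P'.1 ∧ IsBlockDec n l P'.2 ∧
  ∀ h, 1 ≤ h → h ≤ l → P'.2 h = P.1.tauOfInv t (P.2 h)

/-- From the state `st`, the triple `v` (of some variable) can be activated,
possibly after some 3DT-steps using only the internal triples in `ints`. -/
def CanActivate (n l : ℕ) (ints : Set (α × α × α)) (v : α × α × α)
    (st : TDT α n × (ℕ → ℕ)) : Prop :=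
  ∃ (m : ℕ) (c : ℕ → TDT α n × (ℕ → ℕ)) (tr : ℕ → α × α × α),
    c 0 = st ∧ (∀ p ≤ m, StepB n l (tr p) (c p) (c (p + 1))) ∧
    (∀ p < m, tr p ∈ ints) ∧ tr m = v

/-- the block `h` of `(I,s)` reads (in increasing `ψ`-order) exactly as the
word `w`. -/
def BlockWord (n l : ℕ) (I : TDT α n) (s : ℕ → ℕ) (h : ℕ) (w : List α) : Prop :=
  w.Chain' (fun u v => I.psi u < I.psi v) ∧
  (∀ σ ∈ w, σ ∈ I.Sig ∧ InBlock n l s h (I.psi σ)) ∧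
  ∀ σ ∈ I.Sig, InBlock n l s h (I.psi σ) → σ ∈ w

/-- the block `h` is the block `[A1,A2] = copy(A)`,
with word `a y1 e z d y2 x1 b1 c x2 b2 f`. -/
def IsCopyBlock (n l : ℕ) (I : TDT α n) (s : ℕ → ℕ) (h : ℕ) (A A1 A2 : Var α)
    (d e f : α) : Prop :=
  (d, e, f) ∈ I.T ∧
  BlockWord n l I s h
    [A.1.1, A1.2.2.1, e, A.2.2.2, d, A2.2.2.1, A1.2.1, A1.1.2.1, A.1.2.2, A2.2.1, A2.1.2.1, f]

/-- the block `h` is the block `A = and(A1,A2)`,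
with word `a1 e z1 a2 c1 z2 d y c2 x b f`. -/
def IsAndBlock (n l : ℕ) (I : TDT α n) (s : ℕ → ℕ) (h : ℕ) (A1 A2 A : Var α)
    (d e f : α) : Prop :=
  (d, e, f) ∈ I.T ∧
  BlockWord n l I s h
    [A1.1.1, e, A1.2.2.2, A2.1.1, A1.1.2.2, A2.2.2.2, d, A.2.2.1, A2.1.2.2, A.2.1, A.1.2.1, f]

/-- the block `h` is the block `A = or(A1,A2)`,
with word `a1 b' z1 a2 d y a' x b f z2 c1 e c' c2`. -/
def IsOrBlock (n l : ℕ) (I : TDT α n) (s : ℕ → ℕ) (h : ℕ) (A1 A2 A : Var α)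
    (a' b' c' d e f : α) : Prop :=
  (a', b', c') ∈ I.T ∧ (d, e, f) ∈ I.T ∧
  BlockWord n l I s h
    [A1.1.1, b', A1.2.2.2, A2.1.1, d, A.2.2.1, a', A.2.1, A.1.2.1, f, A2.2.2.2, A1.1.2.2, e,
      c', A2.1.2.2]

/-- the block `h` is the block `[A1,A2] = var(A)`,
with word `d1 y1 a d2 y2 e1 a' e2 x1 b1 f1 c' z b' c x2 b2 f2`. -/
def IsVarBlock (n l : ℕ) (I : TDT α n) (s : ℕ → ℕ) (h : ℕ) (A A1 A2 : Var α)
    (d1 e1 f1 d2 e2 f2 a' b' c' : α) : Prop :=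
  (d1, e1, f1) ∈ I.T ∧ (d2, e2, f2) ∈ I.T ∧ (a', b', c') ∈ I.T ∧
  BlockWord n l I s h
    [d1, A1.2.2.1, A.1.1, d2, A2.2.2.1, e1, a', e2, A1.2.1, A1.1.2.1, f1, c', A.2.2.2, b',
      A.1.2.2, A2.2.1, A2.1.2.1, f2]

/-- `(I,s)` is an *assembling of basic blocks* over the set `𝒜` of variables:
the word representation of `I` is a concatenation of `l` blocks, each of one
of the four kinds `copy`, `and`, `or`, `var`; each variable is the input of
exactly one block and the output of exactly one other block, and `T`
consists of the internal triples of the blocks together with the triples of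
the variables. -/
def IsAssembling (n l : ℕ) (I : TDT α n) (s : ℕ → ℕ) (𝒜 : Finset (Var α)) : Prop :=
  IsBlockDec n l s ∧
  (∀ V ∈ 𝒜, V.1 ∈ I.T ∧ V.2 ∈ I.T ∧ V.1 ≠ V.2) ∧
  (∀ V ∈ 𝒜, ∀ W ∈ 𝒜, V ≠ W → V.1 ≠ W.1 ∧ V.1 ≠ W.2 ∧ V.2 ≠ W.1 ∧ V.2 ≠ W.2) ∧
  (∀ V ∈ 𝒜, ∃ h0 h1, VarBlocksAt n l I s h0 h1 V.1.1 V.1.2.1 V.1.2.2 V.2.1 V.2.2.1 V.2.2.2) ∧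
  (∀ t ∈ I.T, InternalT n l I s t ∨ ∃ V ∈ 𝒜, t = V.1 ∨ t = V.2) ∧
  ∀ h, 1 ≤ h → h ≤ l →
    (∃ A ∈ 𝒜, ∃ A1 ∈ 𝒜, ∃ A2 ∈ 𝒜, ∃ d e f : α, IsCopyBlock n l I s h A A1 A2 d e f) ∨
    (∃ A ∈ 𝒜, ∃ A1 ∈ 𝒜, ∃ A2 ∈ 𝒜, ∃ d e f : α, IsAndBlock n l I s h A1 A2 A d e f) ∨
    (∃ A ∈ 𝒜, ∃ A1 ∈ 𝒜, ∃ A2 ∈ 𝒜, ∃ a' b' c' d e f : α,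
      IsOrBlock n l I s h A1 A2 A a' b' c' d e f) ∨
    (∃ A ∈ 𝒜, ∃ A1 ∈ 𝒜, ∃ A2 ∈ 𝒜, ∃ d1 e1 f1 d2 e2 f2 a' b' c' : α,
      IsVarBlock n l I s h A A1 A2 d1 e1 f1 d2 e2 f2 a' b' c')

end Main

/-- satisfiability of a boolean formula in CNF (clauses are lists of
literals; a literal is a pair (variable index, sign)) -/
def CNFSat (m : ℕ) (φ : List (List (Fin m × Bool))) : Prop :=
  ∃ v : Fin m → Bool, ∀ C ∈ φ, ∃ p ∈ C, v p.1 = p.2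

/-!
Composing with a transposition changes the number of breakpoints by at most three, so
`d_b(π) ≤ 3 d_t(π)`; and if `I ∼ π`, the breakpoints of `π` are exactly the positions `ψ(Σ)`,
so `d_b(π) = 3 |T|`.

A 3DT-step along a well-ordered triple with sorted positions `i < j < k` turns `I ∼ π` into
`I' ∼ π ∘ τ_{i,j,k}`, so collapsing `I` sorts `π` with `|T|` transpositions. Conversely, in a
sorting by `|T| = d_b(π)/3` transpositions every transposition removes three breakpoints. For
the first one, `τ_{i,j,k}`, this means `π j = π (i-1) + 1`, `π k = π (j-1) + 1` and
`π i = π (k-1) + 1`; injectivity of `π` then forces the triple of `T` through position `i` to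
sit at the positions `i, j, k` in cyclic order, so it is well-ordered and its 3DT-step realises
`τ_{i,j,k}`. Induction on `|T|` concludes.
-/

section Transposition

variable {i j k n x : ℕ}

lemma tauInv_tau (hij : i < j) (hjk : j < k) (x : ℕ) : tauInv i j k (tau i j k x) = x := by
  simp only [tauInv, tau]; split_ifs <;> omega

lemma tau_tauInv (hij : i < j) (hjk : j < k) (x : ℕ) : tau i j k (tauInv i j k x) = x := by
  simp only [tauInv, tau]; split_ifs <;> omega

lemma tau_injective (hij : i < j) (hjk : j < k) : Function.Injective (tau i j k) :=
  Function.LeftInverse.injective (tauInv_tau hij hjk)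

lemma tau_zero (hi : 0 < i) : tau i j k 0 = 0 := by
  simp [tau, hi]

lemma one_le_tau (hi : 0 < i) (hij : i < j) (hjk : j < k) (hx : 1 ≤ x) : 1 ≤ tau i j k x := by
  simp only [tau]; split_ifs <;> omega

lemma tau_le (hjk : j < k) (hk : k ≤ n) (hx : x ≤ n) : tau i j k x ≤ n := by
  simp only [tau]; split_ifs <;> omega

lemma tau_mapsTo (hjk : j < k) (hk : k ≤ n) : Set.MapsTo (tau i j k) (Set.Icc 0 n) (Set.Icc 0 n) :=
  fun _ hx => ⟨Nat.zero_le _, tau_le hjk hk hx.2⟩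

lemma tau_sub_one (hij : i < j) (hjk : j < k) (hx : 1 ≤ x) (hxi : x ≠ i) (hxq : x ≠ k + i - j)
    (hxk : x ≠ k) : tau i j k (x - 1) = tau i j k x - 1 := by
  simp only [tau]; split_ifs <;> omega

lemma tau_ne_of_ne (hij : i < j) (hjk : j < k) (hxi : x ≠ i) (hxq : x ≠ k + i - j)
    (hxk : x ≠ k) : tau i j k x ≠ i ∧ tau i j k x ≠ j ∧ tau i j k x ≠ k := by
  simp only [tau]; split_ifs <;> omega

lemma tau_tauInv_sub_one (hij : i < j) (hjk : j < k) (hx : 1 ≤ x) (hxi : x ≠ i) (hxj : x ≠ j)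
    (hxk : x ≠ k) : tau i j k (tauInv i j k x - 1) = x - 1 := by
  simp only [tauInv, tau]; split_ifs <;> omega

lemma injOn_comp_tau {π : ℕ → ℕ} (hπ : Set.InjOn π (Set.Icc 0 n)) (hijk : IsTransp n (i, j, k)) :
    Set.InjOn (π ∘ tau i j k) (Set.Icc 0 n) :=
  hπ.comp (tau_injective hijk.2.1 hijk.2.2.1).injOn (tau_mapsTo hijk.2.2.1 hijk.2.2.2)

end Transposition

/-- The constraint that `EquivPerm` imposes on the positions `p, q, r` of a triple. -/
def TripleAdj (π : ℕ → ℕ) (p q r : ℕ) : Prop :=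
  π q = π (p - 1) + 1 ∧ π r = π (q - 1) + 1 ∧ π p = π (r - 1) + 1

section TripleAdj

variable {π : ℕ → ℕ} {i j k n p q r : ℕ}

lemma TripleAdj.rotate (h : TripleAdj π p q r) : TripleAdj π q r p :=
  ⟨h.2.1, h.2.2, h.1⟩

lemma TripleAdj.eq_of_eq_left (hπ : Set.InjOn π (Set.Icc 0 n)) (h : TripleAdj π p q r)
    (h' : TripleAdj π p j k) (hq : q ≤ n) (hr : r ≤ n) (hj : j ≤ n) (hk : k ≤ n) :
    q = j ∧ r = k := by
  have hqj : q = j := hπ ⟨Nat.zero_le _, hq⟩ ⟨Nat.zero_le _, hj⟩ (h.1.trans h'.1.symm)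
  subst hqj
  exact ⟨rfl, hπ ⟨Nat.zero_le _, hr⟩ ⟨Nat.zero_le _, hk⟩ (h.2.1.trans h'.2.1.symm)⟩

lemma TripleAdj.not_adj (hπ : Set.InjOn π (Set.Icc 0 n)) (h : TripleAdj π p q r)
    (hp : p ≤ n) (hq : q ≤ n) (hpq : p ≠ q) : π p ≠ π (p - 1) + 1 :=
  fun hadj => hpq (hπ ⟨Nat.zero_le _, hp⟩ ⟨Nat.zero_le _, hq⟩ (hadj.trans h.1.symm))

lemma tripleAdj_iff_comp_tau (hi : 0 < i) (hij : i < j) (hjk : j < k) :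
    TripleAdj π i j k ↔ ∀ x ∈ ({i, k + i - j, k} : Finset ℕ),
      (π ∘ tau i j k) x = (π ∘ tau i j k) (x - 1) + 1 := by
  have e₁ : tau i j k i = j := by simp only [tau]; split_ifs <;> omega
  have e₂ : tau i j k (k + i - j) = i := by simp only [tau]; split_ifs <;> omega
  have e₃ : tau i j k k = k := by simp only [tau]; split_ifs <;> omega
  have e₄ : tau i j k (i - 1) = i - 1 := by simp only [tau]; split_ifs <;> omega
  have e₅ : tau i j k (k + i - j - 1) = k - 1 := by simp only [tau]; split_ifs <;> omega
  have e₆ : tau i j k (k - 1) = j - 1 := by simp only [tau]; split_ifs <;> omega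
  simp only [Finset.mem_insert, Finset.mem_singleton, forall_eq_or_imp, forall_eq,
    Function.comp, e₁, e₂, e₃, e₄, e₅, e₆, TripleAdj]
  tauto

end TripleAdj

def breakpoints (n : ℕ) (π : ℕ → ℕ) : Finset ℕ :=
  (Finset.Icc 1 n).filter fun x => π x ≠ π (x - 1) + 1

section Breakpoints

variable {π f g : ℕ → ℕ} {i j k n x : ℕ}

lemma card_breakpoints : (breakpoints n π).card = db n π := rfl

lemma mem_breakpoints : x ∈ breakpoints n π ↔ (1 ≤ x ∧ x ≤ n) ∧ π x ≠ π (x - 1) + 1 := by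
  simp [breakpoints]

lemma breakpoints_congr (h : ∀ x ≤ n, f x = g x) : breakpoints n f = breakpoints n g := by
  refine Finset.filter_congr fun x hx => ?_
  rw [Finset.mem_Icc] at hx
  rw [h x hx.2, h (x - 1) (by omega)]

lemma breakpoints_eq_empty (h : ∀ x ≤ n, π x = x) : breakpoints n π = ∅ := by
  rw [breakpoints_congr h]
  ext x
  simp only [mem_breakpoints, Finset.notMem_empty, iff_false]
  omega

lemma card_breakpoints_comp_tau_sdiff_le (hi : 0 < i) (hij : i < j) (hjk : j < k) (hk : k ≤ n)
    (π : ℕ → ℕ) :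
    (breakpoints n (π ∘ tau i j k) \ {i, k + i - j, k}).card ≤
      (breakpoints n π \ {i, j, k}).card := by
  refine Finset.card_le_card_of_injOn (tau i j k) (fun x hx => ?_) (tau_injective hij hjk).injOn
  simp only [Finset.coe_sdiff, Set.mem_sdiff, Finset.mem_coe, mem_breakpoints,
    Finset.coe_insert, Finset.coe_singleton, Set.mem_insert_iff, Set.mem_singleton_iff,
    not_or, Function.comp] at hx ⊢
  obtain ⟨⟨⟨hx1, hxn⟩, hbp⟩, hxi, hxq, hxk⟩ := hx
  rw [tau_sub_one hij hjk hx1 hxi hxq hxk] at hbp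
  exact ⟨⟨⟨one_le_tau hi hij hjk hx1, tau_le hjk hk hxn⟩, hbp⟩, tau_ne_of_ne hij hjk hxi hxq hxk⟩

lemma card_breakpoints_comp_tau_sdiff (hi : 0 < i) (hij : i < j) (hjk : j < k) (hk : k ≤ n)
    (π : ℕ → ℕ) :
    (breakpoints n (π ∘ tau i j k) \ {i, k + i - j, k}).card =
      (breakpoints n π \ {i, j, k}).card := by
  refine le_antisymm (card_breakpoints_comp_tau_sdiff_le hi hij hjk hk π) ?_
  have h := card_breakpoints_comp_tau_sdiff_le (j := k + i - j) hi (by omega) (by omega) hk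
    (π ∘ tau i j k)
  have hinv : breakpoints n ((π ∘ tau i j k) ∘ tau i (k + i - j) k) = breakpoints n π :=
    breakpoints_congr fun x _ => congrArg π (tau_tauInv hij hjk x)
  rwa [show k + i - (k + i - j) = j by omega, hinv] at h

lemma db_le_db_comp_tau_add_three (hi : 0 < i) (hij : i < j) (hjk : j < k) (hk : k ≤ n)
    (π : ℕ → ℕ) : db n π ≤ db n (π ∘ tau i j k) + 3 := by
  have h := card_breakpoints_comp_tau_sdiff hi hij hjk hk π
  have h₁ := Finset.le_card_sdiff {i, j, k} (breakpoints n π)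
  have h₂ := Finset.card_le_card
    (Finset.sdiff_subset (s := breakpoints n (π ∘ tau i j k)) (t := {i, k + i - j, k}))
  have h₃ : ({i, j, k} : Finset ℕ).card ≤ 3 := Finset.card_le_three
  rw [← card_breakpoints, ← card_breakpoints]
  omega

lemma tripleAdj_of_db_comp_tau (hi : 0 < i) (hij : i < j) (hjk : j < k) (hk : k ≤ n)
    (h : db n (π ∘ tau i j k) + 3 ≤ db n π) : TripleAdj π i j k := by
  have hS : breakpoints n (π ∘ tau i j k) ∩ {i, k + i - j, k} = ∅ := by
    have h₁ := card_breakpoints_comp_tau_sdiff hi hij hjk hk π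
    have h₂ := Finset.card_sdiff_add_card_inter (breakpoints n (π ∘ tau i j k)) {i, k + i - j, k}
    have h₃ := Finset.le_card_sdiff {i, j, k} (breakpoints n π)
    have h₄ : ({i, j, k} : Finset ℕ).card ≤ 3 := Finset.card_le_three
    rw [← Finset.card_eq_zero, ← card_breakpoints, ← card_breakpoints] at *
    omega
  rw [tripleAdj_iff_comp_tau hi hij hjk]
  intro x hx
  by_contra hne
  have hxB : x ∈ breakpoints n (π ∘ tau i j k) := by
    refine mem_breakpoints.mpr ⟨?_, hne⟩
    simp only [Finset.mem_insert, Finset.mem_singleton] at hx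
    omega
  simpa [hS] using Finset.mem_inter.mpr ⟨hxB, hx⟩

end Breakpoints

section Sorting

variable {π : ℕ → ℕ} {n m : ℕ}

lemma sortsIn_zero_iff : SortsIn n π 0 ↔ ∀ x ≤ n, π x = x := by
  simp [SortsIn]

lemma sortsIn_succ_iff :
    SortsIn n π (m + 1) ↔ ∃ i j k, IsTransp n (i, j, k) ∧ SortsIn n (π ∘ tau i j k) m := by
  constructor
  · rintro ⟨L, hlen, htr, hsort⟩
    obtain rfl | ⟨L, ⟨i, j, k⟩, rfl⟩ := L.eq_nil_or_concat'
    · simp at hlen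
    refine ⟨i, j, k, htr _ (by simp), L, by simpa using hlen,
      fun u hu => htr u (by simp [hu]), fun x hx => ?_⟩
    simpa using hsort x hx
  · rintro ⟨i, j, k, hijk, L, hlen, htr, hsort⟩
    refine ⟨L ++ [(i, j, k)], by simp [hlen], fun u hu => ?_, fun x hx => by simpa using hsort x hx⟩
    rcases List.mem_append.mp hu with hu | hu
    · exact htr u hu
    · rwa [List.mem_singleton.mp hu]

lemma db_le_of_sortsIn (h : SortsIn n π m) : db n π ≤ 3 * m := by
  induction m generalizing π with
  | zero =>
    rw [← card_breakpoints, breakpoints_eq_empty (sortsIn_zero_iff.mp h)]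
    rfl
  | succ m ih =>
    obtain ⟨i, j, k, ⟨hi, hij, hjk, hk⟩, h⟩ := sortsIn_succ_iff.mp h
    have := db_le_db_comp_tau_add_three (i := i) (j := j) (k := k) hi hij hjk hk π
    have := ih h
    omega

end Sorting

def IsRotation (p q r i j k : ℕ) : Prop :=
  (p, q, r) = (i, j, k) ∨ (q, r, p) = (i, j, k) ∨ (r, p, q) = (i, j, k)

section Rotation

variable {π : ℕ → ℕ} {p q r i j k x : ℕ}

lemma WellOrdered3.isRotation_sorted (h : WellOrdered3 p q r) :
    IsRotation p q r (min3 p q r) (mid3 p q r) (max3 p q r) := by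
  simp only [WellOrdered3, IsRotation, mid3, min3, max3, Prod.mk.injEq] at h ⊢
  omega

lemma IsRotation.wellOrdered3 (hij : i < j) (hjk : j < k) (h : IsRotation p q r i j k) :
    WellOrdered3 p q r ∧ min3 p q r = i ∧ mid3 p q r = j ∧ max3 p q r = k := by
  simp only [WellOrdered3, IsRotation, mid3, min3, max3, Prod.mk.injEq] at h ⊢
  omega

lemma IsRotation.tripleAdj (h : IsRotation p q r i j k) (hadj : TripleAdj π p q r) :
    TripleAdj π i j k := by
  rcases h with h | h | h <;> simp only [Prod.mk.injEq] at h <;>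
    obtain ⟨rfl, rfl, rfl⟩ := h
  exacts [hadj, hadj.rotate, hadj.rotate.rotate]

lemma IsRotation.eq_or_eq_or_eq_iff (h : IsRotation p q r i j k) :
    x = p ∨ x = q ∨ x = r ↔ x = i ∨ x = j ∨ x = k := by
  simp only [IsRotation, Prod.mk.injEq] at h
  omega

end Rotation

namespace TDT

variable {α : Type*} [DecidableEq α] {n : ℕ} (I : TDT α n) {t : α × α × α} {σ : α}

lemma psi_mem_Icc (hσ : σ ∈ I.Sig) : 1 ≤ I.psi σ ∧ I.psi σ ≤ n :=
  Finset.mem_Icc.mp (I.psi_mem σ hσ)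

lemma mem_trElems_iff (ht : t ∈ I.T) (hσ : σ ∈ I.Sig) :
    σ ∈ trElems t ↔ I.psi σ = I.psi t.1 ∨ I.psi σ = I.psi t.2.1 ∨ I.psi σ = I.psi t.2.2 := by
  obtain ⟨ha, hb, hc⟩ := I.mem_T t ht
  simp only [trElems, Finset.mem_insert, Finset.mem_singleton, I.psi_inj.eq_iff hσ ha,
    I.psi_inj.eq_iff hσ hb, I.psi_inj.eq_iff hσ hc]

lemma card_trElems (ht : t ∈ I.T) : (trElems t).card = 3 := by
  obtain ⟨hab, hac, hbc⟩ := I.nodup_T t ht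
  simp [trElems, Finset.card_insert_of_notMem, hab, hac, hbc]

lemma Sig_eq_biUnion : I.Sig = I.T.biUnion trElems := by
  ext σ
  simp only [Finset.mem_biUnion]
  refine ⟨I.cover σ, fun ⟨t, ht, hσ⟩ => ?_⟩
  obtain ⟨ha, hb, hc⟩ := I.mem_T t ht
  simp only [trElems, Finset.mem_insert, Finset.mem_singleton] at hσ
  rcases hσ with rfl | rfl | rfl <;> assumption

lemma card_Sig : I.Sig.card = 3 * I.T.card := by
  rw [Sig_eq_biUnion, Finset.card_biUnion I.disj_T, Finset.sum_congr rfl fun t => I.card_trElems,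
    Finset.sum_const, smul_eq_mul, mul_comm]

lemma card_dom : I.dom.card = 3 * I.T.card := by
  rw [dom, Finset.card_image_of_injOn I.psi_inj, card_Sig]

lemma Sig_eq_empty_iff : I.Sig = ∅ ↔ I.T = ∅ := by
  rw [← Finset.card_eq_zero, ← Finset.card_eq_zero, card_Sig]
  omega

lemma isTransp_sorted (ht : t ∈ I.T) (hwo : I.WellOrderedT t) :
    IsTransp n (min3 (I.psi t.1) (I.psi t.2.1) (I.psi t.2.2),
      mid3 (I.psi t.1) (I.psi t.2.1) (I.psi t.2.2),
      max3 (I.psi t.1) (I.psi t.2.1) (I.psi t.2.2)) := by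
  obtain ⟨ha, hb, hc⟩ := I.mem_T t ht
  have := I.psi_mem_Icc ha
  have := I.psi_mem_Icc hb
  have := I.psi_mem_Icc hc
  simp only [TDT.WellOrderedT, WellOrdered3, IsTransp, mid3, min3, max3] at hwo ⊢
  omega

end TDT

namespace EquivPerm

variable {α : Type*} [DecidableEq α] {n : ℕ} {I : TDT α n} {π : ℕ → ℕ} {t : α × α × α}

lemma tripleAdj (heq : EquivPerm I π) (ht : t ∈ I.T) :
    TripleAdj π (I.psi t.1) (I.psi t.2.1) (I.psi t.2.2) :=
  heq.2.2 t ht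

lemma eq_id_of_Sig_eq_empty (heq : EquivPerm I π) (hS : I.Sig = ∅) : ∀ x ≤ n, π x = x := by
  intro x hx
  induction x with
  | zero => exact heq.1
  | succ x ih =>
    rw [heq.2.1 (x + 1) (by omega) hx (by simp [TDT.dom, hS]), Nat.add_sub_cancel, ih (by omega)]

lemma breakpoints_eq_dom (heq : EquivPerm I π) (hπ : Set.InjOn π (Set.Icc 0 n)) :
    breakpoints n π = I.dom := by
  ext x
  refine ⟨fun hx => ?_, fun hx => ?_⟩
  · obtain ⟨⟨hx1, hxn⟩, hbp⟩ := mem_breakpoints.mp hx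
    by_contra hdom
    exact hbp (heq.2.1 x hx1 hxn hdom)
  · obtain ⟨σ, hσ, rfl⟩ := Finset.mem_image.mp hx
    obtain ⟨t, ht, hσt⟩ := I.cover σ hσ
    obtain ⟨ha, hb, hc⟩ := I.mem_T t ht
    obtain ⟨hab, hac, hbc⟩ := I.nodup_T t ht
    have hadj := heq.tripleAdj ht
    have := I.psi_mem_Icc ha
    have := I.psi_mem_Icc hb
    have := I.psi_mem_Icc hc
    refine mem_breakpoints.mpr ⟨I.psi_mem_Icc hσ, ?_⟩
    simp only [trElems, Finset.mem_insert, Finset.mem_singleton] at hσt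
    rcases hσt with rfl | rfl | rfl
    · exact hadj.not_adj hπ (by omega) (by omega) (I.psi_inj.ne ha hb hab)
    · exact hadj.rotate.not_adj hπ (by omega) (by omega) (I.psi_inj.ne hb hc hbc)
    · exact hadj.rotate.rotate.not_adj hπ (by omega) (by omega) (I.psi_inj.ne hc ha hac.symm)

lemma db_eq (heq : EquivPerm I π) (hπ : Set.InjOn π (Set.Icc 0 n)) : db n π = 3 * I.T.card := by
  rw [← card_breakpoints, heq.breakpoints_eq_dom hπ, I.card_dom]

lemma exists_rotation_of_tripleAdj (heq : EquivPerm I π) (hπ : Set.InjOn π (Set.Icc 0 n))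
    {i j k : ℕ} (hijk : IsTransp n (i, j, k)) (hadj : TripleAdj π i j k) :
    ∃ t ∈ I.T, IsRotation (I.psi t.1) (I.psi t.2.1) (I.psi t.2.2) i j k := by
  obtain ⟨hi, hij, hjk, hk⟩ : 0 < i ∧ i < j ∧ j < k ∧ k ≤ n := hijk
  have hidom : i ∈ I.dom := by
    by_contra hdom
    have := hπ ⟨Nat.zero_le _, (by omega : j ≤ n)⟩ ⟨Nat.zero_le _, (by omega : i ≤ n)⟩
      (hadj.1.trans (heq.2.1 i hi (by omega) hdom).symm)
    omega
  obtain ⟨σ, hσ, hσi⟩ := Finset.mem_image.mp hidom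
  obtain ⟨t, ht, hσt⟩ := I.cover σ hσ
  obtain ⟨ha, hb, hc⟩ := I.mem_T t ht
  have := I.psi_mem_Icc ha
  have := I.psi_mem_Icc hb
  have := I.psi_mem_Icc hc
  have htadj := heq.tripleAdj ht
  refine ⟨t, ht, ?_⟩
  simp only [trElems, Finset.mem_insert, Finset.mem_singleton] at hσt
  rcases hσt with rfl | rfl | rfl <;> rw [← hσi] at hadj
  · obtain ⟨h₁, h₂⟩ := htadj.eq_of_eq_left hπ hadj (by omega) (by omega) (by omega) hk
    exact Or.inl (by rw [hσi, h₁, h₂])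
  · obtain ⟨h₁, h₂⟩ := htadj.rotate.eq_of_eq_left hπ hadj (by omega) (by omega) (by omega) hk
    exact Or.inr (Or.inl (by rw [hσi, h₁, h₂]))
  · obtain ⟨h₁, h₂⟩ := htadj.rotate.rotate.eq_of_eq_left hπ hadj (by omega) (by omega) (by omega) hk
    exact Or.inr (Or.inr (by rw [hσi, h₁, h₂]))

end EquivPerm

section Step

variable {α : Type*} [DecidableEq α] {n : ℕ} {I I' : TDT α n} {π : ℕ → ℕ} {t : α × α × α}

lemma TDT.exists_stepT (ht : t ∈ I.T) (hwo : I.WellOrderedT t) : ∃ I', StepT t I I' := by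
  obtain ⟨hi, hij, hjk, hk⟩ := I.isTransp_sorted ht hwo
  dsimp only at hi hij hjk hk
  have hnot : ∀ t' ∈ I.T.erase t, ∀ σ ∈ trElems t', σ ∉ trElems t := fun t' ht' σ hσ hσt =>
    Finset.disjoint_left.mp (I.disj_T t ht t' (Finset.mem_of_mem_erase ht')
      (Finset.ne_of_mem_erase ht').symm) hσt hσ
  refine ⟨⟨I.Sig \ trElems t, I.T.erase t, fun σ => I.tauOfInv t (I.psi σ),
    fun t' ht' => ?_, fun σ hσ => ?_, fun t' ht' => I.nodup_T t' (Finset.mem_of_mem_erase ht'),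
    fun t' ht' t'' ht'' => I.disj_T t' (Finset.mem_of_mem_erase ht') t''
      (Finset.mem_of_mem_erase ht''), fun σ hσ => ?_, fun σ hσ σ' hσ' hσσ' => ?_⟩,
    ht, hwo, rfl, rfl, fun _ _ => rfl⟩
  · obtain ⟨ha, hb, hc⟩ := I.mem_T t' (Finset.mem_of_mem_erase ht')
    simp only [Finset.mem_sdiff]
    exact ⟨⟨ha, hnot t' ht' _ (by simp [trElems])⟩, ⟨hb, hnot t' ht' _ (by simp [trElems])⟩,
      ⟨hc, hnot t' ht' _ (by simp [trElems])⟩⟩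
  · obtain ⟨hσI, hσt⟩ := Finset.mem_sdiff.mp hσ
    obtain ⟨t', ht', hσt'⟩ := I.cover σ hσI
    exact ⟨t', Finset.mem_erase.mpr ⟨fun h => hσt (h ▸ hσt'), ht'⟩, hσt'⟩
  · obtain ⟨h1, hn⟩ := I.psi_mem_Icc (Finset.mem_sdiff.mp hσ).1
    exact Finset.mem_Icc.mpr ⟨one_le_tau hi (by omega) (by omega) h1, tau_le (by omega) hk hn⟩
  · exact I.psi_inj (Finset.mem_sdiff.mp hσ).1 (Finset.mem_sdiff.mp hσ').1
      ((tau_injective (by omega) (by omega)).eq_iff.mp hσσ')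

lemma StepT.card_T_add_one (hstep : StepT t I I') : I'.T.card + 1 = I.T.card :=
  hstep.2.2.2.1 ▸ Finset.card_erase_add_one hstep.1

lemma EquivPerm.comp_tauOf (heq : EquivPerm I π) (hstep : StepT t I I') :
    EquivPerm I' (π ∘ I.tauOf t) := by
  obtain ⟨ht, hwo, hSig, hT, hpsi⟩ := hstep
  obtain ⟨hi, hij, hjk, hk⟩ := I.isTransp_sorted ht hwo
  dsimp only at hi hij hjk hk
  have hrot := WellOrdered3.isRotation_sorted hwo
  set i := min3 (I.psi t.1) (I.psi t.2.1) (I.psi t.2.2)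
  set j := mid3 (I.psi t.1) (I.psi t.2.1) (I.psi t.2.2)
  set k := max3 (I.psi t.1) (I.psi t.2.1) (I.psi t.2.2)
  have hpos : ∀ σ ∈ I.Sig, σ ∈ trElems t ↔ I.psi σ = i ∨ I.psi σ = j ∨ I.psi σ = k :=
    fun σ hσ => (I.mem_trElems_iff ht hσ).trans hrot.eq_or_eq_or_eq_iff
  have hshift : ∀ σ ∈ I'.Sig,
      tau i j k (I'.psi σ) = I.psi σ ∧ tau i j k (I'.psi σ - 1) = I.psi σ - 1 := by
    intro σ hσ
    obtain ⟨hσI, hσt⟩ := Finset.mem_sdiff.mp (hSig ▸ hσ)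
    rw [hpos σ hσI, not_or, not_or] at hσt
    rw [hpsi σ hσ]
    exact ⟨tau_tauInv hij hjk _,
      tau_tauInv_sub_one hij hjk (I.psi_mem_Icc hσI).1 hσt.1 hσt.2.1 hσt.2.2⟩
  have hτ : I.tauOf t = tau i j k := rfl
  rw [hτ]
  refine ⟨by simp [tau_zero hi, heq.1], fun v hv1 hvn hv => ?_, fun t' ht' => ?_⟩
  · by_cases hcut : v ∈ ({i, k + i - j, k} : Finset ℕ)
    · exact (tripleAdj_iff_comp_tau hi hij hjk).mp (hrot.tripleAdj (heq.tripleAdj ht)) v hcut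
    simp only [Finset.mem_insert, Finset.mem_singleton, not_or] at hcut
    obtain ⟨hvi, hvq, hvk⟩ := hcut
    show π (tau i j k v) = π (tau i j k (v - 1)) + 1
    rw [tau_sub_one hij hjk hv1 hvi hvq hvk]
    refine heq.2.1 _ (one_le_tau hi hij hjk hv1) (tau_le hjk hk hvn) fun hdom => hv ?_
    obtain ⟨σ, hσ, hσv⟩ := Finset.mem_image.mp hdom
    have hσt : σ ∉ trElems t := by
      rw [hpos σ hσ, hσv]
      have := tau_ne_of_ne hij hjk hvi hvq hvk
      tauto
    have hσ' : σ ∈ I'.Sig := hSig ▸ Finset.mem_sdiff.mpr ⟨hσ, hσt⟩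
    exact Finset.mem_image.mpr ⟨σ, hσ', by rw [hpsi σ hσ', hσv]; exact tauInv_tau hij hjk v⟩
  · obtain ⟨ha, hb, hc⟩ := I'.mem_T t' ht'
    have := heq.tripleAdj (Finset.mem_of_mem_erase (hT ▸ ht'))
    simpa only [TripleAdj, Function.comp, (hshift _ ha).1, (hshift _ ha).2, (hshift _ hb).1,
      (hshift _ hb).2, (hshift _ hc).1, (hshift _ hc).2] using this

end Step

namespace EquivPerm

variable {α : Type*} [DecidableEq α] {n : ℕ} {I J : TDT α n} {π : ℕ → ℕ}

lemma sortsIn_of_reflTransGen (hsteps : Relation.ReflTransGen (fun X Y => ∃ t, StepT t X Y) I J)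
    (hJ : J.Sig = ∅) (heq : EquivPerm I π) (hπ : Set.InjOn π (Set.Icc 0 n)) :
    SortsIn n π I.T.card := by
  induction hsteps using Relation.ReflTransGen.head_induction_on generalizing π with
  | refl =>
    rw [J.Sig_eq_empty_iff.mp hJ, Finset.card_empty, sortsIn_zero_iff]
    exact heq.eq_id_of_Sig_eq_empty hJ
  | head hstep _ ih =>
    obtain ⟨t, hstep⟩ := hstep
    have hijk := TDT.isTransp_sorted _ hstep.1 hstep.2.1
    rw [← hstep.card_T_add_one, sortsIn_succ_iff]
    exact ⟨_, _, _, hijk, ih (heq.comp_tauOf hstep) (injOn_comp_tau hπ hijk)⟩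

lemma collapsible_of_sortsIn (heq : EquivPerm I π) (hπ : Set.InjOn π (Set.Icc 0 n))
    (hsort : SortsIn n π I.T.card) : Collapsible I := by
  induction hT : I.T.card generalizing I π with
  | zero =>
    have hT : I.T = ∅ := Finset.card_eq_zero.mp hT
    exact ⟨I, .refl, I.Sig_eq_empty_iff.mpr hT, hT⟩
  | succ m ih =>
    rw [hT] at hsort
    obtain ⟨i, j, k, hijk, hsort⟩ := sortsIn_succ_iff.mp hsort
    have ⟨hi, hij, hjk, hk⟩ : 0 < i ∧ i < j ∧ j < k ∧ k ≤ n := hijk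
    have hadj : TripleAdj π i j k := by
      refine tripleAdj_of_db_comp_tau hi hij hjk hk ?_
      have := db_le_of_sortsIn hsort
      have := heq.db_eq hπ
      omega
    obtain ⟨t, ht, hrot⟩ := heq.exists_rotation_of_tripleAdj hπ hijk hadj
    obtain ⟨hwo, hi', hj', hk'⟩ := hrot.wellOrdered3 hij hjk
    obtain ⟨I', hstep⟩ := TDT.exists_stepT ht hwo
    have hτ : I.tauOf t = tau i j k := by
      funext x
      simp only [TDT.tauOf, tauStep, hi', hj', hk']
    have hm : I'.T.card = m := by
      have := hstep.card_T_add_one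
      omega
    obtain ⟨J, hsteps, hJ⟩ :=
      ih (hτ ▸ heq.comp_tauOf hstep) (injOn_comp_tau hπ hijk) (hm ▸ hsort) hm
    exact ⟨J, .head ⟨t, hstep⟩ hsteps, hJ⟩

theorem collapsible_iff_sortsIn (heq : EquivPerm I π) (hπ : Set.InjOn π (Set.Icc 0 n)) :
    Collapsible I ↔ SortsIn n π I.T.card :=
  ⟨fun ⟨_, hsteps, hJ, _⟩ => sortsIn_of_reflTransGen hsteps hJ heq hπ,
    collapsible_of_sortsIn heq hπ⟩

end EquivPerm

/-- Theorem 1 of the paper.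
Let `I = ⟨Σ,T,ψ⟩` be a 3DT-instance of span `n` and `π` a permutation of
`{0,…,n}` with `I ∼ π`. Then `I` is 3DT-collapsible iff
`d_t(π) = |T| = d_b(π)/3`. -/
theorem stmt7 {α : Type*} [DecidableEq α] {n : ℕ} (I : TDT α n) (π : ℕ → ℕ)
    (hbij : Set.BijOn π (Set.Icc 0 n) (Set.Icc 0 n))
    (heq : EquivPerm I π) :
    Collapsible I ↔
      IsLeast {m | SortsIn n π m} I.T.card ∧ I.T.card = db n π / 3 := by
  have hdb := heq.db_eq hbij.injOn
  rw [heq.collapsible_iff_sortsIn hbij.injOn]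
  exact ⟨fun h => ⟨⟨h, fun m hm => by have := db_le_of_sortsIn hm; omega⟩, by omega⟩,
    fun h => h.1.1⟩
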